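/- arXiv:2107.12334 — 2 statements merged into one kernel-verified Lean document; each statement's English description precedes it below -/
import Mathlib

section
/- On a finite metric space (X,d), let d_λ be the truncated ground metric. Then for all probability measures μ, ν on X and every probability measure μ' on X, W_{d_λ}(μ,ν) ≤ W_d(μ',ν) + λ·Σ_x|μ'(x)−μ(x)|. -/
open Finset

variable {X : Type*} [Fintype X]

/-- A probability vector on a finite set. -/
def IsProb (μ : X → ℝ) : Prop := (∀ x, 0 ≤ μ x) ∧ ∑ x, μ x = 1

/-- A coupling of `μ` and `ν`. -/
def IsCoupling (μ ν : X → ℝ) (π : X → X → ℝ) : Prop :=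
  (∀ x y, 0 ≤ π x y) ∧ (∀ x, ∑ y, π x y = μ x) ∧ (∀ y, ∑ x, π x y = ν y)

/-- Wasserstein-1 distance on a finite space with ground cost `d`. -/
noncomputable def W (d : X → X → ℝ) (μ ν : X → ℝ) : ℝ :=
  sInf {c | ∃ π : X → X → ℝ, IsCoupling μ ν π ∧ c = ∑ x, ∑ y, d x y * π x y}

/-- Total variation distance between probability vectors. -/
noncomputable def TV (μ ν : X → ℝ) : ℝ := (1 / 2) * ∑ x, |μ x - ν x|

lemma key_bound [MetricSpace X] (l : ℝ) (hl : 0 < l)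
    (μ ν μ' : X → ℝ) (hμ : IsProb μ) (hν : IsProb ν) (hμ' : IsProb μ')
    (π : X → X → ℝ) (hπ : IsCoupling μ' ν π) :
    W (fun x y => min l (dist x y)) μ ν ≤
      (∑ x, ∑ y, dist x y * π x y) + l * ∑ x, |μ' x - μ x| := by
  classical
  obtain ⟨hπ0, hπrow, hπcol⟩ := hπ
  set p : X → ℝ := fun x => max (μ x - μ' x) 0 with hp
  set q : X → ℝ := fun x => max (μ' x - μ x) 0 with hq
  set m : ℝ := ∑ x, q x with hm
  have hp0 : ∀ x, 0 ≤ p x := fun x => le_max_right _ _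
  have hq0 : ∀ x, 0 ≤ q x := fun x => le_max_right _ _
  have hm0 : 0 ≤ m := Finset.sum_nonneg fun x _ => hq0 x
  have hpq : ∀ x, p x - q x = μ x - μ' x := by
    intro x; simp only [hp, hq]; rcases le_total (μ x) (μ' x) with h | h <;>
      [rw [max_eq_right (by linarith), max_eq_left (by linarith)];
       rw [max_eq_left (by linarith), max_eq_right (by linarith)]] <;> ring
  have hsump : ∑ x, p x = m := by
    have h1 : ∑ x, (p x - q x) = ∑ x, (μ x - μ' x) := Finset.sum_congr rfl fun x _ => hpq x
    rw [Finset.sum_sub_distrib, Finset.sum_sub_distrib, hμ.2, hμ'.2] at h1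
    linarith [h1]
  have habs : ∀ x, |μ' x - μ x| = p x + q x := by
    intro x; simp only [hp, hq]; rcases le_total (μ x) (μ' x) with h | h
    · rw [abs_of_nonneg (by linarith), max_eq_right (by linarith), max_eq_left (by linarith)]; ring
    · rw [abs_of_nonpos (by linarith), max_eq_left (by linarith), max_eq_right (by linarith)]; ring
  have hsumabs : ∑ x, |μ' x - μ x| = 2 * m := by
    rw [show (2:ℝ) * m = m + m by ring]
    calc ∑ x, |μ' x - μ x| = ∑ x, (p x + q x) := Finset.sum_congr rfl fun x _ => habs x
    _ = m + m := by rw [Finset.sum_add_distrib, hsump, hm]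
  -- q vanishes when m = 0
  have hqzero : m = 0 → ∀ x, q x = 0 := by
    intro h x
    exact (Finset.sum_eq_zero_iff_of_nonneg (fun x _ => hq0 x)).mp (hm ▸ h) x (Finset.mem_univ x)
  have hpzero : m = 0 → ∀ x, p x = 0 := by
    intro h x
    exact (Finset.sum_eq_zero_iff_of_nonneg (fun x _ => hp0 x)).mp (hsump.trans h) x (Finset.mem_univ x)
  -- the coupling of μ and μ'
  set γ : X → X → ℝ := fun x z => (if x = z then min (μ x) (μ' x) else 0) + p x * q z / m with hγ
  have hγ0 : ∀ x z, 0 ≤ γ x z := by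
    intro x z
    apply add_nonneg
    · split <;> simp [le_min (hμ.1 x) (hμ'.1 x)]
    · exact div_nonneg (mul_nonneg (hp0 x) (hq0 z)) hm0
  have hγrow : ∀ x, ∑ z, γ x z = μ x := by
    intro x
    simp only [hγ]
    rw [Finset.sum_add_distrib, Finset.sum_ite_eq Finset.univ x (fun _ => min (μ x) (μ' x))]
    simp only [Finset.mem_univ, if_true]
    rw [← Finset.sum_div, ← Finset.mul_sum, ← hm]
    rcases eq_or_ne m 0 with h | h
    · have := hpzero h x
      have h2 : μ x ≤ μ' x := by
        have := hpzero h x; simp only [hp, max_eq_right_iff] at this; linarith [this]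
      rw [h, min_eq_left h2]; simp
    · rw [mul_div_assoc, div_self h, mul_one]
      have := hpq x
      rcases le_total (μ x) (μ' x) with h2 | h2
      · rw [min_eq_left h2]
        have : p x = 0 := max_eq_right (by linarith)
        rw [this]; ring
      · rw [min_eq_right h2]
        have : p x = μ x - μ' x := max_eq_left (by linarith)
        rw [this]; ring
  have hγcol : ∀ z, ∑ x, γ x z = μ' z := by
    intro z
    simp only [hγ]
    rw [Finset.sum_add_distrib, Finset.sum_ite_eq' Finset.univ z (fun x => min (μ x) (μ' x))]
    simp only [Finset.mem_univ, if_true]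
    rw [← Finset.sum_div, ← Finset.sum_mul, hsump]
    rcases eq_or_ne m 0 with h | h
    · have h2 : μ' z ≤ μ z := by
        have := hqzero h z; simp only [hq, max_eq_right_iff] at this; linarith [this]
      rw [h, min_eq_right h2]; simp
    · rw [mul_comm, mul_div_assoc, div_self h, mul_one]
      rcases le_total (μ z) (μ' z) with h2 | h2
      · rw [min_eq_left h2]
        have : q z = μ' z - μ z := max_eq_left (by linarith)
        rw [this]; ring
      · rw [min_eq_right h2]
        have : q z = 0 := max_eq_right (by linarith)
        rw [this]; ring
  -- the conditional kernel
  set k : X → X → ℝ := fun z y => π z y / μ' z with hk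
  have hk0 : ∀ z y, 0 ≤ k z y := fun z y => div_nonneg (hπ0 z y) (hμ'.1 z)
  have hπz : ∀ z, μ' z = 0 → ∀ y, π z y = 0 := by
    intro z h y
    exact (Finset.sum_eq_zero_iff_of_nonneg (fun y _ => hπ0 z y)).mp ((hπrow z).trans h) y (Finset.mem_univ y)
  have hkrow : ∀ z, ∑ y, k z y ≤ 1 := by
    intro z
    simp only [hk]
    rw [← Finset.sum_div, hπrow z]
    rcases eq_or_ne (μ' z) 0 with h | h
    · simp [h]
    · rw [div_self h]
  have hμk : ∀ z y, μ' z * k z y = π z y := by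
    intro z y
    rcases eq_or_ne (μ' z) 0 with h | h
    · simp [h, hπz z h y]
    · simp only [hk]; field_simp
  have hγz : ∀ x z, μ' z = 0 → γ x z = 0 := by
    intro x z h
    have hq' : q z = 0 := max_eq_right (by linarith [hμ.1 z])
    simp only [hγ, hq', mul_zero, zero_div, add_zero]
    split
    · rename_i he; rw [he, h, min_eq_right (hμ.1 z)]
    · rfl
  -- the glued coupling
  set σ : X → X → ℝ := fun x y => ∑ z, γ x z * k z y with hσ
  have hσ0 : ∀ x y, 0 ≤ σ x y :=
    fun x y => Finset.sum_nonneg fun z _ => mul_nonneg (hγ0 x z) (hk0 z y)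
  have hσrow : ∀ x, ∑ y, σ x y = μ x := by
    intro x
    simp only [hσ]
    rw [Finset.sum_comm]
    calc ∑ z, ∑ y, γ x z * k z y = ∑ z, γ x z * ∑ y, k z y := by
          simp [Finset.mul_sum]
    _ = ∑ z, γ x z := by
          refine Finset.sum_congr rfl fun z _ => ?_
          rcases eq_or_ne (μ' z) 0 with h | h
          · simp [hγz x z h]
          · have : ∑ y, k z y = 1 := by
              simp only [hk]; rw [← Finset.sum_div, hπrow z, div_self h]
            rw [this, mul_one]
    _ = μ x := hγrow x
  have hσcol : ∀ y, ∑ x, σ x y = ν y := by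
    intro y
    simp only [hσ]
    rw [Finset.sum_comm]
    calc ∑ z, ∑ x, γ x z * k z y = ∑ z, (∑ x, γ x z) * k z y := by
          simp [Finset.sum_mul]
    _ = ∑ z, π z y := by
          refine Finset.sum_congr rfl fun z _ => ?_
          rw [hγcol z, hμk z y]
    _ = ν y := hπcol y
  -- truncated metric facts
  set dl : X → X → ℝ := fun x y => min l (dist x y) with hdl
  have hdl0 : ∀ x y, 0 ≤ dl x y := fun x y => le_min hl.le dist_nonneg
  have hdll : ∀ x y, dl x y ≤ l := fun x y => min_le_left _ _
  have hdltri : ∀ x z y, dl x y ≤ dl x z + dl z y := by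
    intro x z y
    simp only [hdl]
    rcases le_total l (dist x z) with h | h
    · rw [min_eq_left h]
      have := le_min hl.le (dist_nonneg (x := z) (y := y))
      linarith [min_le_left l (dist x y)]
    · rcases le_total l (dist z y) with h2 | h2
      · rw [min_eq_left h2]
        have := le_min hl.le (dist_nonneg (x := x) (y := z))
        linarith [min_le_left l (dist x y)]
      · rw [min_eq_right h, min_eq_right h2]
        have := dist_triangle x z y
        linarith [min_le_right l (dist x y)]
  have hγoff : ∀ x z, x ≠ z → γ x z = p x * q z / m := fun x z h => by simp [hγ, h]
  have hdldiag : ∀ x, dl x x = 0 := fun x => by simp [hdl, min_eq_right hl.le]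
  have hdld : ∀ x y, dl x y ≤ dist x y := fun x y => min_le_right _ _
  clear_value σ k γ dl m q p
  -- cost bound
  have cost_le : ∑ x, ∑ y, dl x y * σ x y ≤
      (∑ x, ∑ z, dl x z * γ x z) + (∑ z, ∑ y, dist z y * π z y) := by
    have step1 : ∑ x, ∑ y, dl x y * σ x y ≤
        ∑ x, ∑ y, ∑ z, (dl x z + dl z y) * (γ x z * k z y) := by
      refine Finset.sum_le_sum fun x _ => Finset.sum_le_sum fun y _ => ?_
      simp only [hσ, Finset.mul_sum]
      refine Finset.sum_le_sum fun z _ => ?_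
      exact mul_le_mul_of_nonneg_right (hdltri x z y)
        (mul_nonneg (hγ0 x z) (hk0 z y))
    have step2 : ∑ x, ∑ y, ∑ z, (dl x z + dl z y) * (γ x z * k z y) =
        (∑ x, ∑ y, ∑ z, dl x z * (γ x z * k z y)) +
        (∑ x, ∑ y, ∑ z, dl z y * (γ x z * k z y)) := by
      simp [add_mul, Finset.sum_add_distrib]
    have partA : ∑ x, ∑ y, ∑ z, dl x z * (γ x z * k z y) ≤ ∑ x, ∑ z, dl x z * γ x z := by
      refine Finset.sum_le_sum fun x _ => ?_
      rw [Finset.sum_comm]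
      refine Finset.sum_le_sum fun z _ => ?_
      calc ∑ y, dl x z * (γ x z * k z y) = dl x z * γ x z * ∑ y, k z y := by
            rw [Finset.mul_sum]
            exact Finset.sum_congr rfl fun y _ => by ring
      _ ≤ dl x z * γ x z * 1 :=
            mul_le_mul_of_nonneg_left (hkrow z) (mul_nonneg (hdl0 x z) (hγ0 x z))
      _ = dl x z * γ x z := mul_one _
    have partB : ∑ x, ∑ y, ∑ z, dl z y * (γ x z * k z y) ≤ ∑ z, ∑ y, dist z y * π z y := by
      have key : ∑ x, ∑ y, ∑ z, dl z y * (γ x z * k z y) = ∑ y, ∑ z, dl z y * π z y := by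
        rw [Finset.sum_comm]
        refine Finset.sum_congr rfl fun y _ => ?_
        rw [Finset.sum_comm]
        refine Finset.sum_congr rfl fun z _ => ?_
        calc ∑ x, dl z y * (γ x z * k z y) = (∑ x, γ x z) * (dl z y * k z y) := by
              rw [Finset.sum_mul]
              exact Finset.sum_congr rfl fun x _ => by ring
        _ = dl z y * π z y := by rw [hγcol z, ← hμk z y]; ring
      rw [key, Finset.sum_comm]
      exact Finset.sum_le_sum fun a _ => Finset.sum_le_sum fun b _ =>
        mul_le_mul_of_nonneg_right (hdld _ _) (hπ0 _ _)
    linarith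
  -- bound on the γ cost
  have γcost : ∑ x, ∑ z, dl x z * γ x z ≤ l * ∑ x, |μ' x - μ x| := by
    have step : ∑ x, ∑ z, dl x z * γ x z ≤ ∑ x, ∑ z, l * (p x * q z / m) := by
      refine Finset.sum_le_sum fun x _ => Finset.sum_le_sum fun z _ => ?_
      rcases eq_or_ne x z with h | h
      · subst h
        rw [hdldiag x, zero_mul]
        exact mul_nonneg hl.le (div_nonneg (mul_nonneg (hp0 x) (hq0 x)) hm0)
      · rw [hγoff x z h]
        exact mul_le_mul_of_nonneg_right (hdll x z)
          (div_nonneg (mul_nonneg (hp0 x) (hq0 z)) hm0)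
    have sumeq : ∑ x, ∑ z, l * (p x * q z / m) = l * (m * m / m) := by
      calc ∑ x, ∑ z, l * (p x * q z / m) = ∑ x, l * (p x * m / m) := by
            refine Finset.sum_congr rfl fun x _ => ?_
            rw [← Finset.mul_sum, ← Finset.sum_div, ← Finset.mul_sum, ← hm]
      _ = l * ((∑ x, p x) * m / m) := by
            rw [← Finset.mul_sum, ← Finset.sum_div, ← Finset.sum_mul]
      _ = l * (m * m / m) := by rw [hsump]
    have final : l * (m * m / m) ≤ l * (2 * m) := by
      rcases eq_or_ne m 0 with h | h
      · rw [h]; simp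
      · rw [mul_div_assoc, div_self h, mul_one]
        nlinarith [hm0, hl.le]
    rw [hsumabs]
    calc ∑ x, ∑ z, dl x z * γ x z ≤ l * (m * m / m) := sumeq ▸ step
    _ ≤ l * (2 * m) := final
  -- conclude via sInf
  have hmem : (∑ x, ∑ y, dl x y * σ x y) ∈
      {c | ∃ π : X → X → ℝ, IsCoupling μ ν π ∧ c = ∑ x, ∑ y, dl x y * π x y} :=
    ⟨σ, ⟨hσ0, hσrow, hσcol⟩, rfl⟩
  have hbdd : BddBelow {c | ∃ π : X → X → ℝ, IsCoupling μ ν π ∧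
      c = ∑ x, ∑ y, dl x y * π x y} := by
    refine ⟨0, fun c hc => ?_⟩
    obtain ⟨π', hπ', rfl⟩ := hc
    exact Finset.sum_nonneg fun x _ => Finset.sum_nonneg fun y _ =>
      mul_nonneg (hdl0 x y) (hπ'.1 x y)
  have hW : W dl μ ν ≤ ∑ x, ∑ y, dl x y * σ x y :=
    csInf_le hbdd hmem
  calc W dl μ ν ≤ ∑ x, ∑ y, dl x y * σ x y := hW
  _ ≤ (∑ x, ∑ z, dl x z * γ x z) + (∑ z, ∑ y, dist z y * π z y) := cost_le
  _ ≤ (∑ x, ∑ y, dist x y * π x y) + l * ∑ x, |μ' x - μ x| := by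
      rw [add_comm]
      exact add_le_add_right γcost _


/-- Easy inequality of the unbalanced equivalence: the truncated Wasserstein
distance is bounded by the balanced Wasserstein from any intermediate measure
`μ'` plus `λ` times the mass moved to reach `μ'`. -/
theorem truncated_wasserstein_le_unbalanced [MetricSpace X] (l : ℝ) (hl : 0 < l)
    (μ ν μ' : X → ℝ) (hμ : IsProb μ) (hν : IsProb ν) (hμ' : IsProb μ') :
    W (fun x y => min l (dist x y)) μ ν ≤
      W (fun x y => dist x y) μ' ν + l * ∑ x, |μ' x - μ x| := by
  have hprod : IsCoupling μ' ν (fun x y => μ' x * ν y) := by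
    refine ⟨fun x y => mul_nonneg (hμ'.1 x) (hν.1 y), fun x => ?_, fun y => ?_⟩
    · rw [← Finset.mul_sum, hν.2, mul_one]
    · rw [← Finset.sum_mul, hμ'.2, one_mul]
  have hne : {c | ∃ π : X → X → ℝ, IsCoupling μ' ν π ∧
      c = ∑ x, ∑ y, dist x y * π x y}.Nonempty :=
    ⟨_, fun x y => μ' x * ν y, hprod, rfl⟩
  have hkey : W (fun x y => min l (dist x y)) μ ν - l * ∑ x, |μ' x - μ x| ≤
      W (fun x y => dist x y) μ' ν := by
    refine le_csInf hne fun c hc => ?_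
    obtain ⟨π, hπ, rfl⟩ := hc
    linarith [key_bound l hl μ ν μ' hμ hν hμ' π hπ]
  linarith
end

section
/- The truncated Wasserstein distance is Lipschitz in the truncation parameter: for 0 < λ₁ ≤ λ₂, W_{d_{λ₂}}(μ,ν) − W_{d_{λ₁}}(μ,ν) ≤ (λ₂ − λ₁)·TV(μ,ν), where TV(μ,ν) = (1/2)Σ_x|μ(x)−ν(x)|. -/
/-!
Bounding the truncated cost pointwise, `min λ₂ d ≤ min λ₁ d + (λ₂ - λ₁) · 1[x ≠ y]`, shows that
for any coupling `π` the `d_{λ₂}`-cost exceeds the `d_{λ₁}`-cost by at most `(λ₂ - λ₁)` times the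
off-diagonal mass of `π`. It therefore suffices to find a `d_{λ₁}`-optimal coupling whose diagonal
dominates `min μ ν`, i.e. whose off-diagonal mass is at most `TV μ ν`. Since `d_{λ₁}` is a
pseudometric, take among the optimal couplings one of maximal trace: if `π x x < min (μ x) (ν x)`,
some mass leaves `x` (to `y`) and some arrives at `x` (from `z`); rerouting it as `z → y`, `x → x`
does not increase the cost by the triangle inequality but increases the trace.
-/


open Finset

variable {X : Type*} [Fintype X]

section Coupling

variable {μ ν : X → ℝ} {π : X → X → ℝ}

noncomputable def transportCost (d π : X → X → ℝ) : ℝ := ∑ x, ∑ y, d x y * π x y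

theorem continuous_transportCost (d : X → X → ℝ) : Continuous (transportCost d) := by
  unfold transportCost
  fun_prop

theorem W_eq_sInf_image (d : X → X → ℝ) (μ ν : X → ℝ) :
    W d μ ν = sInf (transportCost d '' {π | IsCoupling μ ν π}) := by
  unfold W transportCost
  congr 1
  ext c
  simp [eq_comm]

theorem isCoupling_mul (hμ : IsProb μ) (hν : IsProb ν) : IsCoupling μ ν fun x y => μ x * ν y :=
  ⟨fun x y => mul_nonneg (hμ.1 x) (hν.1 y), fun x => by rw [← mul_sum, hν.2, mul_one],
    fun y => by rw [← sum_mul, hμ.2, one_mul]⟩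

theorem IsCoupling.le_left (hπ : IsCoupling μ ν π) (x y : X) : π x y ≤ μ x :=
  hπ.2.1 x ▸ single_le_sum (fun y _ => hπ.1 x y) (mem_univ y)

theorem isCompact_setOf_isCoupling (μ ν : X → ℝ) :
    IsCompact {π : X → X → ℝ | IsCoupling μ ν π} := by
  refine (isCompact_Icc (a := 0) (b := fun x _ => μ x)).of_isClosed_subset ?_
    fun π hπ => ⟨fun x y => hπ.1 x y, fun x y => hπ.le_left x y⟩
  simp only [IsCoupling, Set.ofPred_and, Set.ofPred_forall]
  refine .inter (isClosed_iInter fun x => isClosed_iInter fun y => isClosed_le (by fun_prop)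
    (by fun_prop)) (.inter (isClosed_iInter fun x => isClosed_eq (by fun_prop) (by fun_prop))
    (isClosed_iInter fun y => isClosed_eq (by fun_prop) (by fun_prop)))

theorem W_le_transportCost (d : X → X → ℝ) (hπ : IsCoupling μ ν π) :
    W d μ ν ≤ transportCost d π := by
  rw [W_eq_sInf_image]
  exact csInf_le (((isCompact_setOf_isCoupling μ ν).image
    (continuous_transportCost d)).bddBelow) (Set.mem_image_of_mem _ hπ)

theorem W_eq_transportCost_of_isMinOn {d : X → X → ℝ} (hπ : IsCoupling μ ν π)
    (hmin : IsMinOn (transportCost d) {π | IsCoupling μ ν π} π) :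
    W d μ ν = transportCost d π := by
  rw [W_eq_sInf_image]
  exact IsLeast.csInf_eq ⟨Set.mem_image_of_mem _ hπ, Set.forall_mem_image.2 hmin⟩

theorem IsCoupling.add_mul_of_sum_eq_zero (hπ : IsCoupling μ ν π) {f g : X → ℝ}
    (hf : ∑ a, f a = 0) (hg : ∑ b, g b = 0) (hnonneg : ∀ a b, 0 ≤ π a b + f a * g b) :
    IsCoupling μ ν fun a b => π a b + f a * g b :=
  ⟨hnonneg, fun a => by rw [sum_add_distrib, ← mul_sum, hg, mul_zero, add_zero, hπ.2.1],
    fun b => by rw [sum_add_distrib, ← sum_mul, hf, zero_mul, add_zero, hπ.2.2]⟩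

theorem IsCoupling.exists_transportCost_le_and_trace_lt {d : X → X → ℝ}
    (hd : ∀ x, d x x = 0) (htri : ∀ x y z, d x z ≤ d x y + d y z) (hπ : IsCoupling μ ν π)
    {x y z : X} (hyx : y ≠ x) (hzx : z ≠ x) (hy : 0 < π x y) (hz : 0 < π z x) :
    ∃ π', IsCoupling μ ν π' ∧ transportCost d π' ≤ transportCost d π ∧
      ∑ a, π a a < ∑ a, π' a a := by
  classical
  obtain ⟨ε, hε, hεy, hεz⟩ : ∃ ε, 0 < ε ∧ ε ≤ π x y ∧ ε ≤ π z x :=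
    ⟨_, lt_min hy hz, min_le_left _ _, min_le_right _ _⟩
  -- Adding `f ⊗ g` moves mass `ε` from `x → y` and `z → x` to `x → x` and `z → y`.
  set f : X → ℝ := fun a => ε * ((if a = x then 1 else 0) - if a = z then 1 else 0)
  set g : X → ℝ := fun b => (if b = x then 1 else 0) - if b = y then 1 else 0
  refine ⟨fun a b => π a b + f a * g b,
    hπ.add_mul_of_sum_eq_zero (by simp [f, ← mul_sum]) (by simp [g]) ?_, ?_, ?_⟩
  · intro a b
    have := hπ.1 a b
    simp only [f, g]
    split_ifs <;> simp_all <;> linarith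
  · have hcost : transportCost d (fun a b => π a b + f a * g b) =
        transportCost d π + ε * (d x x - d x y + d z y - d z x) := by
      simp only [transportCost, mul_sub, mul_ite, mul_one, mul_zero, mul_add, sum_add_distrib,
        sum_sub_distrib, sum_ite_eq', mem_univ, ↓reduceIte, add_right_inj, f, g]
      ring
    rw [hcost]
    nlinarith [htri z x y, hd x]
  · have : ε ≤ ∑ a, f a * g a := by
      simp only [mul_sub, mul_ite, mul_one, mul_zero, sum_sub_distrib, sum_ite_eq', mem_univ,
        ↓reduceIte, hzx.symm, sub_zero, hyx, zero_sub, sub_neg_eq_add, le_add_iff_nonneg_right,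
        f, g]
      split_ifs <;> linarith
    simp only [sum_add_distrib]
    linarith

theorem exists_ne_pos_of_lt_sum {h : X → ℝ} {x : X} (hx : h x < ∑ y, h y) :
    ∃ y ≠ x, 0 < h y := by
  classical
  by_contra! hle
  have : ∑ y ∈ univ.erase x, h y ≤ 0 := sum_nonpos fun y hy => hle y (ne_of_mem_erase hy)
  linarith [add_sum_erase univ h (mem_univ x)]

theorem exists_isMinOn_transportCost_maximizing_trace (d : X → X → ℝ) (hμ : IsProb μ)
    (hν : IsProb ν) :
    ∃ π, IsCoupling μ ν π ∧ IsMinOn (transportCost d) {π | IsCoupling μ ν π} π ∧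
      ∀ π', IsCoupling μ ν π' → transportCost d π' = transportCost d π →
        ∑ a, π' a a ≤ ∑ a, π a a := by
  have hS := isCompact_setOf_isCoupling μ ν
  obtain ⟨π₀, hπ₀, hmin⟩ :=
    hS.exists_isMinOn ⟨_, isCoupling_mul hμ hν⟩ (continuous_transportCost d).continuousOn
  obtain ⟨π, ⟨hπ, hcost⟩, hmax⟩ :=
    (hS.inter_right (isClosed_eq (continuous_transportCost d) continuous_const)).exists_isMaxOn
      ⟨π₀, hπ₀, rfl⟩ (by fun_prop : Continuous fun π : X → X → ℝ => ∑ a, π a a).continuousOn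
  refine ⟨π, hπ, fun π' hπ' => ?_, fun π' hπ' h => hmax ⟨hπ', h.trans hcost⟩⟩
  exact hcost.le.trans (hmin hπ')

theorem exists_isMinOn_transportCost_min_le_diag {d : X → X → ℝ} (hd : ∀ x, d x x = 0)
    (htri : ∀ x y z, d x z ≤ d x y + d y z) (hμ : IsProb μ) (hν : IsProb ν) :
    ∃ π, IsCoupling μ ν π ∧ IsMinOn (transportCost d) {π | IsCoupling μ ν π} π ∧
      ∀ x, min (μ x) (ν x) ≤ π x x := by
  obtain ⟨π, hπ, hmin, hmax⟩ := exists_isMinOn_transportCost_maximizing_trace d hμ hν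
  refine ⟨π, hπ, hmin, fun x => ?_⟩
  by_contra! hlt
  obtain ⟨y, hyx, hy⟩ := exists_ne_pos_of_lt_sum (h := π x) (x := x)
    (hπ.2.1 x ▸ (lt_min_iff.1 hlt).1)
  obtain ⟨z, hzx, hz⟩ := exists_ne_pos_of_lt_sum (h := fun z => π z x) (x := x)
    (hπ.2.2 x ▸ (lt_min_iff.1 hlt).2)
  obtain ⟨π', hπ', hcost, hdiag⟩ := hπ.exists_transportCost_le_and_trace_lt hd htri hyx hzx hy hz
  exact (hmax π' hπ' (le_antisymm hcost (hmin hπ'))).not_gt hdiag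

theorem IsCoupling.transportCost_le_add_mul (hπ : IsCoupling μ ν π) {d d' : X → X → ℝ} {c : ℝ}
    (hdiag : ∀ x, d' x x ≤ d x x) (hoff : ∀ x y, x ≠ y → d' x y ≤ d x y + c) :
    transportCost d' π ≤ transportCost d π + c * (∑ x, μ x - ∑ x, π x x) := by
  classical
  calc transportCost d' π
      ≤ ∑ x, ∑ y, (d x y + c * (1 - if x = y then 1 else 0)) * π x y := by
        refine sum_le_sum fun x _ => sum_le_sum fun y _ => mul_le_mul_of_nonneg_right ?_ (hπ.1 x y)
        split_ifs with hxy
        · subst hxy; simpa using hdiag x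
        · simpa using hoff x y hxy
    _ = transportCost d π + c * (∑ x, μ x - ∑ x, π x x) := by
        simp [transportCost, add_mul, sum_add_distrib, sub_mul, mul_assoc, ← mul_sum,
          ite_mul, hπ.2.1]

theorem sum_min_eq_sub_TV (μ ν : X → ℝ) :
    ∑ x, min (μ x) (ν x) = (∑ x, μ x + ∑ x, ν x) / 2 - TV μ ν := by
  have hmin : ∀ x, min (μ x) (ν x) = (μ x + ν x - |μ x - ν x|) / 2 := fun x => by
    linarith [min_add_max (μ x) (ν x), max_sub_min_eq_abs' (μ x) (ν x)]
  simp only [hmin, ← sum_div, sum_sub_distrib, sum_add_distrib, TV]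
  ring

end Coupling

section Truncation

variable {X : Type*} [PseudoMetricSpace X] {l l₁ l₂ : ℝ}

theorem min_dist_triangle (hl : 0 ≤ l) (x y z : X) :
    min l (dist x z) ≤ min l (dist x y) + min l (dist y z) := by
  have := dist_triangle x y z
  have := dist_nonneg (x := x) (y := y)
  have := dist_nonneg (x := y) (y := z)
  rcases le_total l (dist x y) with hxy | hxy <;> rcases le_total l (dist y z) with hyz | hyz <;>
    simp only [min_eq_left, min_eq_right, hxy, hyz] <;>
    linarith [min_le_left l (dist x z), min_le_right l (dist x z)]

theorem min_le_min_add_sub (h : l₁ ≤ l₂) (t : ℝ) : min l₂ t ≤ min l₁ t + (l₂ - l₁) := by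
  rw [← min_add_add_right]
  exact min_le_min (by linarith) (by linarith)

end Truncation

/-- The truncated Wasserstein distance is Lipschitz in the truncation level. -/
theorem truncated_wasserstein_lipschitz_in_level [MetricSpace X]
    (l₁ l₂ : ℝ) (h1 : 0 < l₁) (h12 : l₁ ≤ l₂)
    (μ ν : X → ℝ) (hμ : IsProb μ) (hν : IsProb ν) :
    W (fun x y => min l₂ (dist x y)) μ ν - W (fun x y => min l₁ (dist x y)) μ ν ≤
      (l₂ - l₁) * TV μ ν := by
  obtain ⟨π, hπ, hmin, hdiag⟩ := exists_isMinOn_transportCost_min_le_diag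
    (d := fun x y => min l₁ (dist x y)) (by simp [h1.le]) (min_dist_triangle h1.le) hμ hν
  have hcost := hπ.transportCost_le_add_mul (d' := fun x y => min l₂ (dist x y)) (c := l₂ - l₁)
    (by simp [h1.le, h1.le.trans h12]) fun x y _ => min_le_min_add_sub h12 _
  have hTV : 1 - TV μ ν ≤ ∑ x, π x x := by
    simpa [sum_min_eq_sub_TV, hμ.2, hν.2] using sum_le_sum fun x (_ : x ∈ univ) => hdiag x
  rw [hμ.2] at hcost
  rw [W_eq_transportCost_of_isMinOn hπ hmin]
  calc _ ≤ transportCost (fun x y => min l₂ (dist x y)) π - transportCost _ π :=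
        sub_le_sub_right (W_le_transportCost _ hπ) _
    _ ≤ (l₂ - l₁) * (1 - ∑ x, π x x) := by linarith
    _ ≤ (l₂ - l₁) * TV μ ν := mul_le_mul_of_nonneg_left (by linarith) (by linarith)
end
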